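/- Let p be a prime, let α, β ∈ ℚ_p with ‖α‖_p = 1 and ‖β‖_p ≤ 1, set Δ = [[0, α], [1, β]], and assume: (a) the polynomial X² − βX − α has no root in ℚ_p; (b) for all b, d ∈ ℚ_p with ‖b‖_p = ‖d‖_p = 1 one has ‖αd² − b² − βbd‖_p ≥ p^{−1}. Let T_Δ be the centralizer of Δ in GL₂(ℚ_p), and for j ∈ ℕ let d_j = [[1, 0], [0, p^j]]. Then every g ∈ GL₂(ℚ_p) lies in the double coset T_Δ·d_j·K_p for exactly one j ∈ ℕ; that is, the double cosets T_Δ d_j K_p, j ≥ 0, are pairwise disjoint and their union is GL₂(ℚ_p). -/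

import Mathlib

/-!
Identify `ℚ_p²` with `E = ℚ_p[Δ]` through `(a, c) ↦ a + cΔ`: then `T_Δ` acts on columns by
multiplication in `E`, and `det (a + cΔ)` is the norm form `N(a, c) = a² + βac - αc²`, which by (a)
vanishes only at `0`.

Existence: dividing `g` by the element of `T_Δ` with the same first column leaves
`[[1, e], [0, f]]`. If `e, f` are integral, this is `d_j k` with `j = v(f)`. Otherwise divide once
more by `e + fΔ`: by (b) and homogeneity, `‖N(e, f)‖ ≥ m² / p ≥ m` for `m = max ‖e‖ ‖f‖ ≥ p`, so
`(e + fΔ)⁻¹` has integral coordinates and we are back in the integral case.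

Uniqueness: if `t d_j k = t' d_{j'} k'`, then `s = t'⁻¹ t ∈ T_Δ` has the integral first column of
`d_{j'} k' k⁻¹`; as `s = a + cΔ` is determined by that column, `‖det s‖ ≤ 1`, and comparing norms of
determinants gives `‖p‖ ^ j' ≤ ‖p‖ ^ j`.
-/

/-- The matrix `d_j = [[1, 0], [0, p^j]]` over `ℚ_p`. -/
noncomputable def dMat (p : ℕ) [Fact (Nat.Prime p)] (j : ℕ) : Matrix (Fin 2) (Fin 2) ℚ_[p] :=
  !![1, 0; 0, (p : ℚ_[p]) ^ j]

/-- The maximal compact subgroup `K_p = GL₂(ℤ_p)`, viewed as the set of invertible matrices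
`k` over `ℚ_p` such that all entries of `k` and of `k⁻¹` have norm at most `1`. -/
def Kp (p : ℕ) [Fact (Nat.Prime p)] : Set (Matrix (Fin 2) (Fin 2) ℚ_[p]) :=
  {k | IsUnit k ∧ ∀ i j, ‖k i j‖ ≤ 1 ∧ ‖k⁻¹ i j‖ ≤ 1}

open Matrix

section CommRing

variable {R : Type*} [CommRing R] (α β : R)

def centralizerElem (a c : R) : Matrix (Fin 2) (Fin 2) R := a • 1 + c • !![0, α; 1, β]

def normForm (a c : R) : R := a ^ 2 + β * a * c - α * c ^ 2

lemma centralizerElem_eq (a c : R) : centralizerElem α β a c = !![a, α * c; c, a + β * c] := by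
  ext i j; fin_cases i <;> fin_cases j <;> simp [centralizerElem, mul_comm]

lemma commute_centralizerElem (a c : R) : Commute (centralizerElem α β a c) !![0, α; 1, β] :=
  ((Commute.one_left _).smul_left a).add_left ((Commute.refl _).smul_left c)

lemma det_centralizerElem (a c : R) : (centralizerElem α β a c).det = normForm α β a c := by
  rw [centralizerElem_eq, det_fin_two_of, normForm]; ring

end CommRing

section Field

variable {K : Type*} [Field K] {α β : K}

lemma eq_centralizerElem_of_commute (hα : α ≠ 0) {s : Matrix (Fin 2) (Fin 2) K}
    (hs : Commute s !![0, α; 1, β]) : s = centralizerElem α β (s 0 0) (s 1 0) := by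
  have h00 := congrFun (congrFun hs 0) 0
  have h01 := congrFun (congrFun hs 0) 1
  simp only [mul_apply, of_apply, cons_val', cons_val_zero, cons_val_one, cons_val_fin_one,
    Fin.sum_univ_two, mul_zero, mul_one, zero_add, zero_mul] at h00 h01
  have h11 : s 1 1 = s 0 0 + β * s 1 0 := mul_left_cancel₀ hα (by rw [← h01, h00]; ring)
  rw [centralizerElem_eq, ← h00, ← h11]
  exact eta_fin_two s

lemma normForm_ne_zero (hroot : ∀ x : K, x ^ 2 - β * x - α ≠ 0) {a c : K} (hac : a ≠ 0 ∨ c ≠ 0) :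
    normForm α β a c ≠ 0 := by
  by_cases hc : c = 0
  · simpa [normForm, hc] using hac
  · intro h
    apply hroot (-(a / c))
    rw [show (-(a / c)) ^ 2 - β * (-(a / c)) - α = normForm α β a c / c ^ 2 by
      unfold normForm; field_simp; ring, h, zero_div]

lemma isUnit_centralizerElem {a c : K} (hN : normForm α β a c ≠ 0) :
    IsUnit (centralizerElem α β a c) :=
  (isUnit_iff_isUnit_det _).2 (by rw [det_centralizerElem]; exact hN.isUnit)

lemma eq_centralizerElem_mul_upper {a b c d : K} (hN : normForm α β a c ≠ 0) :
    !![a, b; c, d] = centralizerElem α β a c *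
      !![1, ((a + β * c) * b - α * c * d) / normForm α β a c;
         0, (a * d - b * c) / normForm α β a c] := by
  set N := normForm α β a c with hN_def
  rw [centralizerElem_eq]
  ext i j; fin_cases i <;> fin_cases j <;> simp [mul_apply, Fin.sum_univ_two] <;> field_simp <;>
    (rw [hN_def, normForm]; ring)

end Field

section IntegralMatrices

variable {p : ℕ} [Fact p.Prime] {n : Type*} [Fintype n] [DecidableEq n]

lemma exists_mapMatrix_eq_of_norm_le_one {k : Matrix n n ℚ_[p]} (hk : ∀ i j, ‖k i j‖ ≤ 1) :
    ∃ M : Matrix n n ℤ_[p], PadicInt.Coe.ringHom.mapMatrix M = k :=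
  ⟨Matrix.of fun i j => ⟨k i j, hk i j⟩, rfl⟩

lemma norm_det_le_one {k : Matrix n n ℚ_[p]} (hk : ∀ i j, ‖k i j‖ ≤ 1) : ‖k.det‖ ≤ 1 := by
  obtain ⟨M, rfl⟩ := exists_mapMatrix_eq_of_norm_le_one hk
  rw [← RingHom.map_det]
  exact PadicInt.norm_le_one _

lemma norm_adjugate_apply_le_one {k : Matrix n n ℚ_[p]} (hk : ∀ i j, ‖k i j‖ ≤ 1) (i j : n) :
    ‖k.adjugate i j‖ ≤ 1 := by
  obtain ⟨M, rfl⟩ := exists_mapMatrix_eq_of_norm_le_one hk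
  rw [← RingHom.map_adjugate]
  exact PadicInt.norm_le_one _

lemma norm_mul_apply_le_one {k k' : Matrix n n ℚ_[p]} (hk : ∀ i j, ‖k i j‖ ≤ 1)
    (hk' : ∀ i j, ‖k' i j‖ ≤ 1) (i j : n) : ‖(k * k') i j‖ ≤ 1 := by
  obtain ⟨M, rfl⟩ := exists_mapMatrix_eq_of_norm_le_one hk
  obtain ⟨M', rfl⟩ := exists_mapMatrix_eq_of_norm_le_one hk'
  rw [← map_mul]
  exact PadicInt.norm_le_one _

end IntegralMatrices

section MaximalCompact

variable {p : ℕ} [Fact p.Prime]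

lemma mem_Kp_iff {k : Matrix (Fin 2) (Fin 2) ℚ_[p]} :
    k ∈ Kp p ↔ (∀ i j, ‖k i j‖ ≤ 1) ∧ ‖k.det‖ = 1 := by
  constructor
  · rintro ⟨hu, hk⟩
    have hdet : k.det * k⁻¹.det = 1 := by
      rw [← det_mul, mul_nonsing_inv _ ((isUnit_iff_isUnit_det k).1 hu), det_one]
    have h := congrArg norm hdet
    rw [norm_mul, norm_one] at h
    have h1 := norm_det_le_one fun i j => (hk i j).1
    have h2 := norm_det_le_one fun i j => (hk i j).2
    refine ⟨fun i j => (hk i j).1, ?_⟩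
    nlinarith [norm_nonneg k.det, norm_nonneg k⁻¹.det]
  · rintro ⟨hk, hdet⟩
    have hdet0 : k.det ≠ 0 := norm_ne_zero_iff.1 (by rw [hdet]; exact one_ne_zero)
    refine ⟨(isUnit_iff_isUnit_det k).2 (isUnit_iff_ne_zero.2 hdet0), fun i j => ⟨hk i j, ?_⟩⟩
    rw [inv_def, Ring.inverse_eq_inv', Matrix.smul_apply, smul_eq_mul, norm_mul, norm_inv, hdet,
      inv_one, one_mul]
    exact norm_adjugate_apply_le_one hk i j

lemma mul_mem_Kp {k k' : Matrix (Fin 2) (Fin 2) ℚ_[p]} (hk : k ∈ Kp p) (hk' : k' ∈ Kp p) :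
    k * k' ∈ Kp p := by
  rw [mem_Kp_iff] at *
  exact ⟨norm_mul_apply_le_one hk.1 hk'.1, by rw [det_mul, norm_mul, hk.2, hk'.2, one_mul]⟩

lemma inv_mem_Kp {k : Matrix (Fin 2) (Fin 2) ℚ_[p]} (hk : k ∈ Kp p) : k⁻¹ ∈ Kp p := by
  have hdet := (isUnit_iff_isUnit_det k).1 hk.1
  refine ⟨(isUnit_iff_isUnit_det _).2 (isUnit_nonsing_inv_det k hdet),
    fun i j => ⟨(hk.2 i j).2, ?_⟩⟩
  rw [nonsing_inv_nonsing_inv k hdet]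
  exact (hk.2 i j).1

lemma swap_mem_Kp : !![0, 1; 1, 0] ∈ Kp p := by
  refine mem_Kp_iff.2 ⟨fun i j => ?_, by simp [det_fin_two_of]⟩
  fin_cases i <;> fin_cases j <;> simp

lemma exists_eq_pow_mul_of_norm_le_one {x : ℚ_[p]} (hx0 : x ≠ 0) (hx : ‖x‖ ≤ 1) :
    ∃ (j : ℕ) (u : ℚ_[p]), ‖u‖ = 1 ∧ x = (p : ℚ_[p]) ^ j * u := by
  set y : ℤ_[p] := ⟨x, hx⟩
  have hy : y ≠ 0 := fun h => hx0 (congrArg Subtype.val h)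
  refine ⟨y.valuation, PadicInt.unitCoeff hy, PadicInt.norm_units _, ?_⟩
  have h := congrArg ((↑) : ℤ_[p] → ℚ_[p]) (PadicInt.unitCoeff_spec hy)
  push_cast at h
  rw [mul_comm]
  exact h

end MaximalCompact

section NormForm

variable {p : ℕ} [Fact p.Prime] {α β : ℚ_[p]}

lemma norm_add_eq_one {x y : ℚ_[p]} (hx : ‖x‖ = 1) (hy : ‖y‖ < 1) : ‖x + y‖ = 1 := by
  rw [IsUltrametricDist.norm_add_eq_max_of_norm_ne_norm (by rw [hx]; exact hy.ne'), hx,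
    max_eq_left hy.le]

lemma inv_le_norm_normForm (hα : ‖α‖ = 1) (hβ : ‖β‖ ≤ 1)
    (hbd : ∀ b d : ℚ_[p], ‖b‖ = 1 → ‖d‖ = 1 → (p : ℝ)⁻¹ ≤ ‖normForm α β b d‖)
    {b d : ℚ_[p]} (hb : ‖b‖ ≤ 1) (hd : ‖d‖ ≤ 1) (hunit : ‖b‖ = 1 ∨ ‖d‖ = 1) :
    (p : ℝ)⁻¹ ≤ ‖normForm α β b d‖ := by
  have hp : (p : ℝ)⁻¹ ≤ 1 := inv_le_one_of_one_le₀ (mod_cast (Fact.out : p.Prime).one_le)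
  have hmid : ‖β * b * d‖ ≤ ‖b‖ * ‖d‖ := by
    rw [norm_mul, norm_mul]
    exact mul_le_mul_of_nonneg_right (mul_le_of_le_one_left (norm_nonneg b) hβ) (norm_nonneg d)
  rcases hb.lt_or_eq with hb1 | hb1 <;> rcases hd.lt_or_eq with hd1 | hd1
  · exact absurd hunit (by rintro (h | h) <;> linarith)
  · have hrest : ‖b ^ 2 + β * b * d‖ < 1 := by
      refine (IsUltrametricDist.norm_add_le_max _ _).trans_lt (max_lt ?_ ?_)
      · rw [norm_pow]; nlinarith [norm_nonneg b]
      · nlinarith [norm_nonneg b]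
    rw [show normForm α β b d = -(α * d ^ 2) + (b ^ 2 + β * b * d) by unfold normForm; ring,
      norm_add_eq_one (by rw [norm_neg, norm_mul, norm_pow, hα, hd1]; norm_num) hrest]
    exact hp
  · have hrest : ‖β * b * d + -(α * d ^ 2)‖ < 1 := by
      refine (IsUltrametricDist.norm_add_le_max _ _).trans_lt (max_lt ?_ ?_)
      · nlinarith [norm_nonneg d]
      · rw [norm_neg, norm_mul, norm_pow, hα]; nlinarith [norm_nonneg d]
    rw [show normForm α β b d = b ^ 2 + (β * b * d + -(α * d ^ 2)) by unfold normForm; ring,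
      norm_add_eq_one (by rw [norm_pow, hb1]; norm_num) hrest]
    exact hp
  · exact hbd b d hb1 hd1

lemma max_norm_le_norm_normForm (hα : ‖α‖ = 1) (hβ : ‖β‖ ≤ 1)
    (hbd : ∀ b d : ℚ_[p], ‖b‖ = 1 → ‖d‖ = 1 → (p : ℝ)⁻¹ ≤ ‖normForm α β b d‖)
    {e f : ℚ_[p]} (h : 1 < max ‖e‖ ‖f‖) : max ‖e‖ ‖f‖ ≤ ‖normForm α β e f‖ := by
  set m := max ‖e‖ ‖f‖
  obtain ⟨s, hsm, hs⟩ : ∃ s, ‖s‖ = m ∧ (s = e ∨ s = f) := by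
    rcases max_choice ‖e‖ ‖f‖ with h | h
    exacts [⟨e, h.symm, .inl rfl⟩, ⟨f, h.symm, .inr rfl⟩]
  have hm0 : 0 < m := by linarith
  have hs0 : s ≠ 0 := norm_pos_iff.1 (hsm ▸ hm0)
  have hunit : ‖e / s‖ = 1 ∨ ‖f / s‖ = 1 := by rcases hs with rfl | rfl <;> simp [hs0]
  have key := inv_le_norm_normForm hα hβ hbd
    (by rw [norm_div, hsm]; exact div_le_one_of_le₀ (le_max_left _ _) hm0.le)
    (by rw [norm_div, hsm]; exact div_le_one_of_le₀ (le_max_right _ _) hm0.le) hunit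
  rw [show normForm α β (e / s) (f / s) = normForm α β e f / s ^ 2 by
    unfold normForm; field_simp, norm_div, norm_pow, hsm, le_div_iff₀ (by positivity)] at key
  -- norms on `ℚ_p` are powers of `p`, so a norm above `1` is at least `p`
  have hpm : (p : ℝ) ≤ m := by
    have := (Padic.norm_le_pow_iff_norm_lt_pow_add_one s 0).not.1 (by rw [hsm]; simpa using h)
    simpa [hsm] using this
  have hp0 : (0 : ℝ) < p := Nat.cast_pos.2 (Fact.out : p.Prime).pos
  calc m = (p : ℝ)⁻¹ * (p * m) := by field_simp
    _ ≤ (p : ℝ)⁻¹ * (m * m) := by gcongr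
    _ ≤ ‖normForm α β e f‖ := by nlinarith

lemma norm_det_le_one_of_commute (hα : ‖α‖ = 1) (hβ : ‖β‖ ≤ 1) {s : Matrix (Fin 2) (Fin 2) ℚ_[p]}
    (hs : Commute s !![0, α; 1, β]) (ha : ‖s 0 0‖ ≤ 1) (hc : ‖s 1 0‖ ≤ 1) : ‖s.det‖ ≤ 1 := by
  rw [eq_centralizerElem_of_commute (norm_pos_iff.1 (by rw [hα]; exact one_pos)) hs]
  refine norm_det_le_one fun i j => ?_
  rw [centralizerElem_eq]
  fin_cases i <;> fin_cases j
  · simpa using ha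
  · simpa [hα] using hc
  · simpa using hc
  · simp only [of_apply, cons_val', cons_val_fin_one, empty_val']
    refine (IsUltrametricDist.norm_add_le_max _ _).trans (max_le ha ?_)
    rw [norm_mul]; exact mul_le_one₀ hβ (norm_nonneg _) hc

end NormForm

section DoubleCoset

variable {p : ℕ} [Fact p.Prime] {α β : ℚ_[p]}

variable (α β) in
def doubleCoset (j : ℕ) : Set (Matrix (Fin 2) (Fin 2) ℚ_[p]) :=
  {g | ∃ t k : Matrix (Fin 2) (Fin 2) ℚ_[p],
    (IsUnit t ∧ t * !![0, α; 1, β] = !![0, α; 1, β] * t) ∧ k ∈ Kp p ∧ g = t * dMat p j * k}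

lemma mul_mem_doubleCoset_left {t g : Matrix (Fin 2) (Fin 2) ℚ_[p]} {j : ℕ} (ht : IsUnit t)
    (htc : Commute t !![0, α; 1, β]) (hg : g ∈ doubleCoset α β j) :
    t * g ∈ doubleCoset α β j := by
  obtain ⟨t₀, k, ⟨ht₀, ht₀c⟩, hk, rfl⟩ := hg
  exact ⟨t * t₀, k, ⟨ht.mul ht₀, htc.mul_left ht₀c⟩, hk, by simp only [mul_assoc]⟩

lemma mul_mem_doubleCoset_right {g w : Matrix (Fin 2) (Fin 2) ℚ_[p]} {j : ℕ}
    (hg : g ∈ doubleCoset α β j) (hw : w ∈ Kp p) : g * w ∈ doubleCoset α β j := by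
  obtain ⟨t, k, ht, hk, rfl⟩ := hg
  exact ⟨t, k * w, ht, mul_mem_Kp hk hw, by simp only [mul_assoc]⟩

lemma exists_upper_mem_doubleCoset_of_norm_le_one {e f : ℚ_[p]} (he : ‖e‖ ≤ 1) (hf : ‖f‖ ≤ 1)
    (hf0 : f ≠ 0) : ∃ j, !![1, e; 0, f] ∈ doubleCoset α β j := by
  obtain ⟨j, u, hu, rfl⟩ := exists_eq_pow_mul_of_norm_le_one hf0 hf
  refine ⟨j, 1, !![1, e; 0, u], ⟨isUnit_one, by simp⟩, mem_Kp_iff.2 ⟨fun i j => ?_, ?_⟩, ?_⟩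
  · fin_cases i <;> fin_cases j <;> simp [he, hu]
  · simpa [det_fin_two_of] using hu
  · ext i j; fin_cases i <;> fin_cases j <;> simp [dMat]

lemma exists_upper_mem_doubleCoset (hα : ‖α‖ = 1) (hβ : ‖β‖ ≤ 1)
    (hroot : ∀ x : ℚ_[p], x ^ 2 - β * x - α ≠ 0)
    (hbd : ∀ b d : ℚ_[p], ‖b‖ = 1 → ‖d‖ = 1 → (p : ℝ)⁻¹ ≤ ‖normForm α β b d‖)
    (e : ℚ_[p]) {f : ℚ_[p]} (hf : f ≠ 0) : ∃ j, !![1, e; 0, f] ∈ doubleCoset α β j := by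
  by_cases h : max ‖e‖ ‖f‖ ≤ 1
  · exact exists_upper_mem_doubleCoset_of_norm_le_one ((le_max_left _ _).trans h)
      ((le_max_right _ _).trans h) hf
  set N := normForm α β e f
  have hN : N ≠ 0 := normForm_ne_zero hroot (.inr hf)
  have hNle := max_norm_le_norm_normForm hα hβ hbd (not_le.1 h)
  have hNpos : 0 < ‖N‖ := norm_pos_iff.2 hN
  -- `(e + β * f) / N` and `-f / N` are the coordinates of `(e + fΔ)⁻¹`
  have hA : ‖(e + β * f) / N‖ ≤ 1 := by
    rw [norm_div, div_le_one hNpos]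
    refine (IsUltrametricDist.norm_add_le_max _ _).trans ((max_le (le_max_left _ _) ?_).trans hNle)
    rw [norm_mul]
    exact (mul_le_of_le_one_left (norm_nonneg f) hβ).trans (le_max_right _ _)
  have hC : ‖-f / N‖ ≤ 1 := by
    rw [norm_div, norm_neg, div_le_one hNpos]
    exact (le_max_right _ _).trans hNle
  obtain ⟨j, hj⟩ := exists_upper_mem_doubleCoset_of_norm_le_one hA hC
    (div_ne_zero (neg_ne_zero.2 hf) hN)
  have hfac := eq_centralizerElem_mul_upper (b := 1) (d := 0) hN
  simp only [mul_one, mul_zero, sub_zero, zero_sub, one_mul] at hfac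
  refine ⟨j, ?_⟩
  rw [show !![1, e; 0, f] = !![e, 1; f, 0] * !![0, 1; 1, 0] by
    ext i j; fin_cases i <;> fin_cases j <;> simp, hfac]
  exact mul_mem_doubleCoset_right
    (mul_mem_doubleCoset_left (isUnit_centralizerElem hN) (commute_centralizerElem α β e f) hj)
    swap_mem_Kp

lemma exists_mem_doubleCoset (hα : ‖α‖ = 1) (hβ : ‖β‖ ≤ 1)
    (hroot : ∀ x : ℚ_[p], x ^ 2 - β * x - α ≠ 0)
    (hbd : ∀ b d : ℚ_[p], ‖b‖ = 1 → ‖d‖ = 1 → (p : ℝ)⁻¹ ≤ ‖normForm α β b d‖)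
    {g : Matrix (Fin 2) (Fin 2) ℚ_[p]} (hg : IsUnit g) : ∃ j, g ∈ doubleCoset α β j := by
  have hdet : g.det ≠ 0 := ((isUnit_iff_isUnit_det g).1 hg).ne_zero
  have hcol : g 0 0 ≠ 0 ∨ g 1 0 ≠ 0 := by
    by_contra! h
    exact hdet (by rw [det_fin_two, h.1, h.2]; ring)
  have hN := normForm_ne_zero hroot hcol
  obtain ⟨j, hj⟩ := exists_upper_mem_doubleCoset hα hβ hroot hbd
    (((g 0 0 + β * g 1 0) * g 0 1 - α * g 1 0 * g 1 1) / normForm α β (g 0 0) (g 1 0))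
    (div_ne_zero (show g 0 0 * g 1 1 - g 0 1 * g 1 0 ≠ 0 by rwa [← det_fin_two]) hN)
  refine ⟨j, ?_⟩
  rw [eta_fin_two g, eq_centralizerElem_mul_upper hN]
  exact mul_mem_doubleCoset_left (isUnit_centralizerElem hN) (commute_centralizerElem α β _ _) hj

lemma le_of_mem_doubleCoset (hα : ‖α‖ = 1) (hβ : ‖β‖ ≤ 1) {g : Matrix (Fin 2) (Fin 2) ℚ_[p]}
    {j j' : ℕ} (hj : g ∈ doubleCoset α β j) (hj' : g ∈ doubleCoset α β j') : j ≤ j' := by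
  obtain ⟨t, k, ⟨ht, htc⟩, hk, rfl⟩ := hj
  obtain ⟨t', k', ⟨ht', htc'⟩, hk', heq⟩ := hj'
  have hdt := (isUnit_iff_isUnit_det t').1 ht'
  have hdk := (isUnit_iff_isUnit_det k).1 hk.1
  set s := t'⁻¹ * t
  set κ := k' * k⁻¹
  have hκ : κ ∈ Kp p := mul_mem_Kp hk' (inv_mem_Kp hk)
  have hsκ : s * dMat p j = dMat p j' * κ := by
    calc s * dMat p j = t'⁻¹ * (t * dMat p j * k) * k⁻¹ := by
          simp only [s, ← mul_assoc, mul_nonsing_inv_cancel_right _ _ hdk]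
      _ = t'⁻¹ * (t' * dMat p j' * k') * k⁻¹ := by rw [heq]
      _ = dMat p j' * κ := by
          simp only [κ, ← mul_assoc, nonsing_inv_mul _ hdt, one_mul]
  have hsc : Commute s !![0, α; 1, β] := by
    obtain ⟨u, rfl⟩ := ht'
    rw [show s = ↑u⁻¹ * t by simp [s, coe_units_inv]]
    exact (Commute.units_inv_left htc').mul_left htc
  obtain ⟨hκint, hκdet⟩ := mem_Kp_iff.1 hκ
  have hs00 : s 0 0 = κ 0 0 := by simpa [dMat, mul_apply] using congrFun (congrFun hsκ 0) 0
  have hs10 : s 1 0 = (p : ℚ_[p]) ^ j' * κ 1 0 := by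
    simpa [dMat, mul_apply] using congrFun (congrFun hsκ 1) 0
  have hpj : ‖(p : ℚ_[p]) ^ j'‖ ≤ 1 := by
    rw [norm_pow]; exact pow_le_one₀ (norm_nonneg _) Padic.norm_p_lt_one.le
  have ha : ‖s 0 0‖ ≤ 1 := hs00 ▸ hκint 0 0
  have hc : ‖s 1 0‖ ≤ 1 := by
    rw [hs10, norm_mul]; exact mul_le_one₀ hpj (norm_nonneg _) (hκint 1 0)
  have hs := norm_det_le_one_of_commute hα hβ hsc ha hc
  have hnorm := congrArg (fun m => ‖m.det‖) hsκ
  simp only [det_mul, norm_mul, hκdet, mul_one, dMat, det_fin_two_of, norm_pow,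
    one_mul, mul_zero, sub_zero] at hnorm
  have hp := Padic.norm_p_lt_one (p := p)
  have hp0 : 0 < ‖(p : ℚ_[p])‖ := by
    rw [Padic.norm_p]; exact inv_pos.2 (Nat.cast_pos.2 (Fact.out : p.Prime).pos)
  rw [← pow_le_pow_iff_right_of_lt_one₀ hp0 hp, ← hnorm]
  exact mul_le_of_le_one_left (by positivity) hs

end DoubleCoset

/-- Every `g ∈ GL₂(ℚ_p)` lies in the double coset `T_Δ·d_j·K_p` for exactly one `j ∈ ℕ`,
where `T_Δ` is the centralizer of `Δ = [[0, α], [1, β]]` in `GL₂(ℚ_p)`. -/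
theorem stmt13 (p : ℕ) [Fact (Nat.Prime p)] (α β : ℚ_[p])
    (hα : ‖α‖ = 1) (hβ : ‖β‖ ≤ 1)
    (hroot : ∀ x : ℚ_[p], x^2 - β * x - α ≠ 0)
    (hbd : ∀ b d : ℚ_[p], ‖b‖ = 1 → ‖d‖ = 1 →
      (p : ℝ)⁻¹ ≤ ‖α * d^2 - b^2 - β * b * d‖)
    (g : Matrix (Fin 2) (Fin 2) ℚ_[p]) (hg : IsUnit g) :
    ∃! j : ℕ, ∃ t k : Matrix (Fin 2) (Fin 2) ℚ_[p],
      (IsUnit t ∧ t * !![0, α; 1, β] = !![0, α; 1, β] * t) ∧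
      k ∈ Kp p ∧ g = t * dMat p j * k := by
  have hN : ∀ b d : ℚ_[p], ‖b‖ = 1 → ‖d‖ = 1 → (p : ℝ)⁻¹ ≤ ‖normForm α β b d‖ := by
    intro b d hb hd
    rw [← norm_neg, show -normForm α β b d = α * d ^ 2 - b ^ 2 - β * b * d by unfold normForm; ring]
    exact hbd b d hb hd
  obtain ⟨j, hj⟩ := exists_mem_doubleCoset hα hβ hroot hN hg
  exact ⟨j, hj, fun j' hj' => le_antisymm (le_of_mem_doubleCoset hα hβ hj' hj)
    (le_of_mem_doubleCoset hα hβ hj hj')⟩
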